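/- arXiv:2010.04449 — 6 statements merged into one kernel-verified Lean document; each statement's English description precedes it below -/
import Mathlib

section
/- Let step be the trace-cost semantics of send and receive actions over cost environments and FIFO dependency queues. If two consecutive send actions p₁q₁!τ₁ and p₂q₂!τ₂ have distinct senders (p₁ ≠ p₂) and target distinct queues ((p₁,q₁) ≠ (p₂,q₂)), then executing them in either order from the same initial state yields the same final state (cost environment and queues). -/
/-- State: cost environment together with FIFO dependency queues. -/
def CState (Role : Type) : Type := (Role → NNReal) × (Role × Role → List NNReal)

/-- Trace-cost semantics of a send action `pq!τ` with send cost `s`. -/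
def sendStep {Role : Type} [DecidableEq Role] (p q : Role) (s : NNReal)
    (st : CState Role) : CState Role :=
  (Function.update st.1 p (st.1 p + s),
   Function.update st.2 (p, q) (st.2 (p, q) ++ [st.1 p + s]))

theorem sendStep_comm {Role : Type} [DecidableEq Role]
    (p₁ q₁ p₂ q₂ : Role) (s₁ s₂ : NNReal)
    (hp : p₁ ≠ p₂) (hq : (p₁, q₁) ≠ (p₂, q₂)) (st : CState Role) :
    sendStep p₁ q₁ s₁ (sendStep p₂ q₂ s₂ st)
      = sendStep p₂ q₂ s₂ (sendStep p₁ q₁ s₁ st) := by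
  unfold sendStep
  refine Prod.ext ?_ ?_ <;> funext x <;> simp only [Function.update]
  · by_cases h1 : x = p₁ <;> by_cases h2 : x = p₂ <;>
      simp_all [Function.update, hp]
  · by_cases h1 : x = (p₁, q₁) <;> by_cases h2 : x = (p₂, q₂) <;>
      simp_all [Function.update, hp, hq, Ne.symm hp]
end

section
/- (Parallel pipeline closed form) Let a, b ≥ 0 and define recurrences P(0) = 0, Q(0) = 0, P(n+1) = P(n) + a, Q(n+1) = max(P(n+1), Q(n)) + b. Then for all n ≥ 1, P(n) = n·a and Q(n) = a + b + (n - 1)·max(a, b). -/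
theorem pipeline_closed_form (a b : ℝ) (ha : 0 ≤ a) (hb : 0 ≤ b)
    (P Q : ℕ → ℝ) (hP0 : P 0 = 0) (hQ0 : Q 0 = 0)
    (hP : ∀ n, P (n + 1) = P n + a)
    (hQ : ∀ n, Q (n + 1) = max (P (n + 1)) (Q n) + b) :
    ∀ n : ℕ, 1 ≤ n →
      P n = (n : ℝ) * a ∧ Q n = a + b + ((n : ℝ) - 1) * max a b := by
  have hPn : ∀ n : ℕ, P n = (n : ℝ) * a := by
    intro n
    induction n with
    | zero => simpa using hP0
    | succ k ih => rw [hP, ih]; push_cast; ring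
  intro n hn
  induction n with
  | zero => omega
  | succ k ih =>
    refine ⟨hPn _, ?_⟩
    rcases Nat.eq_zero_or_pos k with rfl | hk
    · rw [hQ, hQ0, hPn]
      simp [max_eq_left ha]
    · obtain ⟨-, hQk⟩ := ih hk
      rw [hQ, hQk, hPn]
      rcases le_total a b with hab | hba
      · rw [max_eq_right hab]
        have : ((k : ℝ) + 1) * a ≤ a + b + ((k : ℝ) - 1) * b := by
          have h1 : (k : ℝ) * a ≤ (k : ℝ) * b := by
            apply mul_le_mul_of_nonneg_left hab (by positivity)
          nlinarith
        push_cast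
        rw [max_eq_right this]
        ring
      · rw [max_eq_left hba]
        have : a + b + ((k : ℝ) - 1) * a ≤ ((k : ℝ) + 1) * a := by nlinarith
        push_cast
        rw [max_eq_left this]
        ring
end

section
/- (Three-stage pipeline closed form) Let a, b, c ≥ 0 and define P(0)=Q(0)=R(0)=0, P(n+1) = P(n) + a, Q(n+1) = max(P(n+1), Q(n)) + b, R(n+1) = max(Q(n+1), R(n)) + c. Then for all n ≥ 1, R(n) = a + b + c + (n-1)·max(a, max(b, c)). -/
theorem three_stage_pipeline_closed_form (a b c : ℝ)
    (ha : 0 ≤ a) (hb : 0 ≤ b) (hc : 0 ≤ c)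
    (P Q R : ℕ → ℝ) (hP0 : P 0 = 0) (hQ0 : Q 0 = 0) (hR0 : R 0 = 0)
    (hP : ∀ n, P (n + 1) = P n + a)
    (hQ : ∀ n, Q (n + 1) = max (P (n + 1)) (Q n) + b)
    (hR : ∀ n, R (n + 1) = max (Q (n + 1)) (R n) + c) :
    ∀ n : ℕ, 1 ≤ n →
      R n = a + b + c + ((n : ℝ) - 1) * max a (max b c) := by
  have hPn : ∀ n : ℕ, P n = n * a := by
    intro n
    induction n with
    | zero => simpa using hP0
    | succ k ih => rw [hP, ih]; push_cast; ring
  have hQn : ∀ n : ℕ, Q (n + 1) = a + b + n * max a b := by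
    intro n
    induction n with
    | zero =>
      rw [hQ, hQ0, hPn]
      rw [max_eq_left (by simpa using ha)]
      push_cast; ring
    | succ k ih =>
      rw [hQ, ih, hPn]
      have hk : (0:ℝ) ≤ (k:ℝ) := Nat.cast_nonneg k
      rcases le_total a b with h | h
      · rw [max_eq_right h]
        rw [max_eq_right (by push_cast; nlinarith)]
        push_cast; ring
      · rw [max_eq_left h]
        rw [max_eq_left (by push_cast; nlinarith)]
        push_cast; ring
  have hN : max a (max b c) = max (max a b) c := (max_assoc a b c).symm
  have hRn : ∀ n : ℕ, R (n + 1) = a + b + c + n * max a (max b c) := by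
    intro n
    induction n with
    | zero =>
      rw [hR, hR0, hQn]
      have hab : (0:ℝ) ≤ a + b + (0:ℕ) * max a b := by push_cast; nlinarith
      rw [max_eq_left hab]
      push_cast; ring
    | succ k ih =>
      rw [hR, ih, hQn, hN]
      have hk : (0:ℝ) ≤ (k:ℝ) := Nat.cast_nonneg k
      rcases le_total (max a b) c with h | h
      · rw [max_eq_right h]
        have h1 : a + b + ((k:ℕ)+1:ℝ) * max a b ≤ a + b + c + (k:ℝ) * c := by
          nlinarith [mul_le_mul_of_nonneg_left h hk]
        rw [max_eq_right (by push_cast; push_cast at h1; linarith)]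
        push_cast; ring
      · rw [max_eq_left h]
        have h1 : a + b + c + (k:ℝ) * max a b ≤ a + b + ((k:ℕ)+1:ℝ) * max a b := by
          nlinarith
        rw [max_eq_left (by push_cast; push_cast at h1; linarith)]
        push_cast; ring
  intro n hn
  obtain ⟨m, rfl⟩ := Nat.exists_eq_add_of_le hn
  rw [Nat.add_comm, hRn]
  push_cast; ring
end

section
/- (Pipeline difference stabilizes) With the recurrences P(0)=Q(0)=0, P(n+1)=P(n)+a, Q(n+1)=max(P(n+1),Q(n))+b, and a, b ≥ 0, the difference Δ_Q(n) = Q(n+1) - Q(n) equals max(a, b) for all n ≥ 1. -/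
theorem pipeline_difference_stabilizes (a b : ℝ) (ha : 0 ≤ a) (hb : 0 ≤ b)
    (P Q : ℕ → ℝ) (hP0 : P 0 = 0) (hQ0 : Q 0 = 0)
    (hP : ∀ n, P (n + 1) = P n + a)
    (hQ : ∀ n, Q (n + 1) = max (P (n + 1)) (Q n) + b) :
    ∀ n : ℕ, 1 ≤ n → Q (n + 1) - Q n = max a b := by
  have hPn : ∀ n : ℕ, P n = n * a := by
    intro n
    induction n with
    | zero => simpa using hP0
    | succ k ih => rw [hP, ih]; push_cast; ring
  have hQn : ∀ n : ℕ, Q (n + 1) = a + b + n * max a b := by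
    intro n
    induction n with
    | zero =>
      rw [hQ, hPn, hQ0]
      push_cast
      rw [max_eq_left (by linarith)]
      ring
    | succ k ih =>
      rw [hQ, ih, hPn]
      rcases le_total a b with h | h
      · rw [max_eq_right h, max_eq_right (by push_cast; nlinarith)]
        push_cast; ring
      · rw [max_eq_left h, max_eq_left (by push_cast; nlinarith)]
        push_cast; ring
  intro n hn
  obtain ⟨k, rfl⟩ := Nat.exists_eq_add_of_le hn
  rw [add_comm 1 k, hQn, hQn]
  push_cast
  ring
end

section
/- (Dependency cycle / ping-pong closed form) Let Tp, Tq ≥ 0 and s ≥ 0 with s ≤ Tp. Define P(0) = Q(0) = 0, and for each iteration: P(n+1) = max(Q'(n+1), P(n) + s) + (Tp - s), where Q'(n+1) = max(P(n) + s, Q(n)) + Tq, and Q(n+1) = Q'(n+1). Then for all n ≥ 1, P(n) = n·(Tp + Tq) and Q(n) = s + Tq + (n-1)·(Tp + Tq). -/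
theorem pingpong_closed_form (Tp Tq s : ℝ)
    (hTp : 0 ≤ Tp) (hTq : 0 ≤ Tq) (hs : 0 ≤ s) (hsTp : s ≤ Tp)
    (P Q : ℕ → ℝ) (hP0 : P 0 = 0) (hQ0 : Q 0 = 0)
    (hQ : ∀ n, Q (n + 1) = max (P n + s) (Q n) + Tq)
    (hP : ∀ n, P (n + 1) = max (Q (n + 1)) (P n + s) + (Tp - s)) :
    ∀ n : ℕ, 1 ≤ n →
      P n = (n : ℝ) * (Tp + Tq) ∧
      Q n = s + Tq + ((n : ℝ) - 1) * (Tp + Tq) := by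
  intro n hn
  induction n with
  | zero => omega
  | succ m ih =>
    rcases Nat.eq_zero_or_pos m with hm | hm
    · subst hm
      have hQ1 : Q 1 = s + Tq := by
        rw [hQ 0, hP0, hQ0]
        rw [max_eq_left (by linarith)]
        ring
      have hP1 : P 1 = Tp + Tq := by
        rw [hP 0, hQ1, hP0]
        rw [max_eq_left (by linarith)]
        ring
      constructor <;> simp [hP1, hQ1] <;> ring
    · obtain ⟨ihP, ihQ⟩ := ih hm
      have hQm : Q (m + 1) = s + Tq + (m : ℝ) * (Tp + Tq) := by
        rw [hQ m, ihP, ihQ, max_eq_left (by nlinarith)]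
        ring
      have hPm : P (m + 1) = ((m : ℝ) + 1) * (Tp + Tq) := by
        rw [hP m, hQm, ihP, max_eq_left (by nlinarith)]
        ring
      push_cast
      exact ⟨hPm, by rw [hQm]; ring⟩
end

section
/- (Cycle latency) With the ping-pong recurrences above (Tp, Tq ≥ 0, 0 ≤ s ≤ Tp), both difference sequences stabilize: P(n+1) - P(n) = Tp + Tq and Q(n+1) - Q(n) = Tp + Tq for all n ≥ 1. -/
theorem pingpong_cycle_latency (Tp Tq s : ℝ)
    (hTp : 0 ≤ Tp) (hTq : 0 ≤ Tq) (hs : 0 ≤ s) (hsTp : s ≤ Tp)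
    (P Q : ℕ → ℝ) (hP0 : P 0 = 0) (hQ0 : Q 0 = 0)
    (hQ : ∀ n, Q (n + 1) = max (P n + s) (Q n) + Tq)
    (hP : ∀ n, P (n + 1) = max (Q (n + 1)) (P n + s) + (Tp - s)) :
    ∀ n : ℕ, 1 ≤ n →
      P (n + 1) - P n = Tp + Tq ∧ Q (n + 1) - Q n = Tp + Tq := by
  have key : ∀ n : ℕ, 1 ≤ n →
      P n = n * (Tp + Tq) ∧ Q n = n * (Tp + Tq) - Tp + s := by
    intro n hn
    induction n, hn using Nat.le_induction with
    | base =>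
      have hQ1 : Q 1 = s + Tq := by
        rw [hQ 0, hP0, hQ0, max_eq_left (by linarith)]; ring
      have hP1 : P 1 = Tp + Tq := by
        rw [hP 0, hQ1, hP0, max_eq_left (by linarith)]
        ring
      constructor
      · rw [hP1]; push_cast; ring
      · rw [hQ1]; push_cast; ring
    | succ n hn ih =>
      obtain ⟨ihP, ihQ⟩ := ih
      have hQn : Q (n + 1) = (n : ℝ) * (Tp + Tq) + s + Tq := by
        rw [hQ n, ihP, ihQ, max_eq_left (by linarith)]
      have hPn : P (n + 1) = ((n : ℝ) + 1) * (Tp + Tq) := by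
        rw [hP n, hQn, ihP, max_eq_left (by linarith)]
        ring
      constructor
      · rw [hPn]; push_cast; ring
      · rw [hQn]; push_cast; ring
  intro n hn
  obtain ⟨hPn, hQn⟩ := key n hn
  obtain ⟨hPn1, hQn1⟩ := key (n + 1) (by omega)
  rw [hPn, hQn, hPn1, hQn1]
  push_cast
  constructor <;> ring
end
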